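/- Let β₁, β₂ ∈ [0, 1/4] and γ₁ > -β₁, γ₂ > -β₂. Then there is a constant C_d such that for all 0 ≤ s < t and x, y ∈ ℝ^d, ∫_s^t ∫_{ℝ^d} ϱ^{β₁}_{γ₁}(t-r, x-z) ϱ^{β₂}_{γ₂}(r-s, z-y) dz dr ≤ C_d [ ϱ^0_{γ₁+γ₂+β₁+β₂}(t-s,x-y) B(γ₁+β₁+β₂, 1+γ₂) + ϱ^{β₂}_{γ₁+γ₂+β₁}(t-s,x-y) B(γ₁+β₁, 1+γ₂) + ϱ^0_{γ₁+γ₂+β₁+β₂}(t-s,x-y) B(γ₂+β₁+β₂, 1+γ₁) + ϱ^{β₁}_{γ₁+γ₂+β₂}(t-s,x-y) B(γ₂+β₂, 1+γ₁) ]. -/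

import Mathlib

open MeasureTheory Real

noncomputable def varrho (d : ℕ) (β γ : ℝ) (t : ℝ) (x : EuclideanSpace ℝ (Fin d)) : ℝ :=
  t ^ γ * (min (‖x‖ ^ β) 1) * (‖x‖ + t) ^ (-((d : ℝ) + 1))

noncomputable def betaFn (γ β : ℝ) : ℝ :=
  ∫ u in (0:ℝ)..1, (1 - u) ^ (γ - 1) * u ^ (β - 1)

/-!
Put `a = t - r`, `b = r - s`. By the triangle inequality
`‖x - y‖ + (a + b) ≤ (‖x - z‖ + a) + (‖z - y‖ + b)`, so for every `z` one of the two spatial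
denominators is at least half of the one for `(t - s, x - y)` and can be pulled out of the
`z`-integral. The Hölder factor `min (‖x - z‖ ^ β₁) 1` is transferred to `‖x - y‖` by
subadditivity of `u ↦ min (u ^ β₁) 1`, at the price of a power
`(‖z - y‖ + b) ^ β₁`. What remains in `z` are integrals `∫ (‖z‖ + c) ^ (β - d - 1) dz`, which scale
as `c ^ (β - 1)` with a constant uniform in `β ≤ 1/2`, and in `r` Beta integrals
`∫ (t - r) ^ p (r - s) ^ q dr = (t - s) ^ (p + q + 1) B(p + 1, q + 1)`.
-/

open Module Set

lemma min_rpow_one_le_add {β u v w : ℝ} (hβ₀ : 0 ≤ β) (hβ₁ : β ≤ 1) (hu : 0 ≤ u) (hv : 0 ≤ v)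
    (hw : 0 ≤ w) (huvw : u ≤ v + w) :
    min (u ^ β) 1 ≤ min (v ^ β) 1 + min (w ^ β) 1 := by
  have hpow : u ^ β ≤ v ^ β + w ^ β :=
    (rpow_le_rpow hu huvw hβ₀).trans (rpow_add_le_add_rpow hv hw hβ₀ hβ₁)
  have hv' := rpow_nonneg hv β
  have hw' := rpow_nonneg hw β
  simp only [min_def]
  split_ifs <;> linarith

lemma norm_add_rpow_neg_eq {E : Type*} [NormedAddCommGroup E] [NormedSpace ℝ E] {c : ℝ}
    (hc : 0 < c) (q : ℝ) (z : E) :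
    (‖z‖ + c) ^ (-q) = c ^ (-q) * (1 + ‖c⁻¹ • z‖) ^ (-q) := by
  rw [← mul_rpow hc.le (by positivity), norm_smul, norm_inv, norm_of_nonneg hc.le,
    mul_add, mul_inv_cancel_left₀ hc.ne', mul_one, add_comm]

section HaarIntegrals

variable {E : Type*} [NormedAddCommGroup E] [NormedSpace ℝ E] [FiniteDimensional ℝ E]
  [MeasurableSpace E] [BorelSpace E] (μ : Measure E) [μ.IsAddHaarMeasure]

lemma integrable_norm_add_rpow_neg {c q : ℝ} (hc : 0 < c) (hq : (finrank ℝ E : ℝ) < q) :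
    Integrable (fun z : E ↦ (‖z‖ + c) ^ (-q)) μ := by
  simp_rw [norm_add_rpow_neg_eq hc]
  exact ((integrable_one_add_norm hq).comp_smul (inv_ne_zero hc.ne')).const_mul _

lemma integral_norm_add_rpow_neg {c : ℝ} (hc : 0 < c) (q : ℝ) :
    ∫ z, (‖z‖ + c) ^ (-q) ∂μ = c ^ ((finrank ℝ E : ℝ) - q) * ∫ z, (1 + ‖z‖) ^ (-q) ∂μ := by
  simp_rw [norm_add_rpow_neg_eq hc]
  rw [integral_const_mul, Measure.integral_comp_smul μ (fun z ↦ (1 + ‖z‖) ^ (-q)), inv_pow, inv_inv,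
    abs_of_pos (by positivity), smul_eq_mul, ← mul_assoc, sub_eq_add_neg, rpow_add hc,
    rpow_natCast, mul_comm (c ^ (-q))]

lemma integral_one_add_norm_rpow_neg_pos {q : ℝ} (hq : (finrank ℝ E : ℝ) < q) :
    0 < ∫ z, (1 + ‖z‖) ^ (-q) ∂μ := by
  rw [integral_pos_iff_support_of_nonneg (fun z ↦ by positivity) (integrable_one_add_norm hq)]
  have hsupp : Function.support (fun z : E ↦ (1 + ‖z‖) ^ (-q)) = univ :=
    Function.support_eq_univ fun z ↦ (by positivity : (0 : ℝ) < _).ne'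
  rw [hsupp]
  exact isOpen_univ.measure_pos μ univ_nonempty

lemma integral_norm_add_rpow_le {c β : ℝ} (hc : 0 < c) (hβ : β ≤ 1 / 2) :
    ∫ z, (‖z‖ + c) ^ (β - ((finrank ℝ E : ℝ) + 1)) ∂μ
      ≤ (∫ z, (1 + ‖z‖) ^ (-((finrank ℝ E : ℝ) + 1 / 2)) ∂μ) * c ^ (β - 1) := by
  set n : ℝ := (finrank ℝ E : ℝ)
  rw [show β - (n + 1) = -(n + 1 - β) by ring, integral_norm_add_rpow_neg μ hc,
    show n - (n + 1 - β) = β - 1 by ring, mul_comm]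
  refine mul_le_mul_of_nonneg_right (integral_mono_of_nonneg (.of_forall fun z ↦ by positivity)
    (integrable_one_add_norm (by linarith : n < n + 1 / 2)) (.of_forall fun z ↦ ?_)) (by positivity)
  exact rpow_le_rpow_of_exponent_le (by simp) (by linarith)

end HaarIntegrals

lemma betaFn_comm (γ β : ℝ) : betaFn γ β = betaFn β γ := by
  simpa [betaFn, mul_comm] using
    intervalIntegral.integral_comp_sub_left (fun u ↦ (1 - u) ^ (β - 1) * u ^ (γ - 1)) (1 : ℝ)
      (a := 0) (b := 1)

lemma intervalIntegrable_sub_rpow_mul_sub_rpow {p q s t : ℝ} (hp : -1 < p) (hq : -1 < q)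
    (hst : s < t) :
    IntervalIntegrable (fun r ↦ (t - r) ^ p * (r - s) ^ q) volume s t := by
  set m := (s + t) / 2 with hm
  have hsm : s < m := by rw [hm]; linarith
  have hmt : m < t := by rw [hm]; linarith
  have hleft : IntervalIntegrable (fun r ↦ (r - s) ^ q) volume s m := by
    simpa using
      (intervalIntegral.intervalIntegrable_rpow' hq (a := 0) (b := m - s)).comp_sub_right s
  have hright : IntervalIntegrable (fun r ↦ (t - r) ^ p) volume m t := by
    simpa using
      (intervalIntegral.intervalIntegrable_rpow' hp (a := t - m) (b := 0)).comp_sub_left t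
  refine (hleft.continuousOn_mul ?_).trans (hright.mul_continuousOn ?_)
  · refine (continuous_sub_left t).continuousOn.rpow_const fun r hr ↦ Or.inl ?_
    rw [uIcc_of_le hsm.le] at hr
    linarith [hr.2]
  · refine (continuous_sub_right s).continuousOn.rpow_const fun r hr ↦ Or.inl ?_
    rw [uIcc_of_le hmt.le] at hr
    linarith [hr.1]

lemma integral_sub_rpow_mul_sub_rpow {s t : ℝ} (hst : s < t) (p q : ℝ) :
    ∫ r in s..t, (t - r) ^ p * (r - s) ^ q = (t - s) ^ (p + q + 1) * betaFn (p + 1) (q + 1) := by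
  set T := t - s
  have hT : 0 < T := sub_pos.2 hst
  have hsub : ∀ u ∈ uIcc (0 : ℝ) 1,
      (t - (s + T * u)) ^ p * (s + T * u - s) ^ q = T ^ (p + q) * ((1 - u) ^ p * u ^ q) := by
    intro u hu
    rw [uIcc_of_le zero_le_one] at hu
    rw [show t - (s + T * u) = T * (1 - u) by ring, add_sub_cancel_left,
      mul_rpow hT.le (by linarith [hu.2]), mul_rpow hT.le hu.1, rpow_add hT]
    ring
  have := intervalIntegral.smul_integral_comp_add_mul (fun r ↦ (t - r) ^ p * (r - s) ^ q) T s
    (a := 0) (b := 1)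
  rw [mul_zero, add_zero, mul_one, add_sub_cancel, intervalIntegral.integral_congr hsub,
    intervalIntegral.integral_const_mul, smul_eq_mul] at this
  rw [← this, betaFn, rpow_add_one hT.ne']
  simp only [add_sub_cancel_right]
  ring

lemma min_rpow_mul_min_rpow_le {e β₁ β₂ u v w a b : ℝ} (he : 0 ≤ e) (hβ₁₀ : 0 ≤ β₁)
    (hβ₁₁ : β₁ ≤ 1) (hβ₂ : 0 ≤ β₂) (hu : 0 ≤ u) (hv : 0 ≤ v) (hw : 0 ≤ w) (ha : 0 < a)
    (hb : 0 < b) (huvw : u ≤ w + v) (hfar : w + (a + b) ≤ 2 * (u + a)) :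
    min (u ^ β₁) 1 * (u + a) ^ (-e) * (min (v ^ β₂) 1 * (v + b) ^ (-e))
      ≤ 2 ^ e * (w + (a + b)) ^ (-e)
        * (min (w ^ β₁) 1 * (v + b) ^ (β₂ - e) + (v + b) ^ (β₁ + β₂ - e)) := by
  have hB : 0 < v + b := by positivity
  have hK : 0 < w + (a + b) := by positivity
  have h₁ : min (u ^ β₁) 1 ≤ min (w ^ β₁) 1 + (v + b) ^ β₁ :=
    (min_rpow_one_le_add hβ₁₀ hβ₁₁ hu hw hv huvw).trans <| add_le_add_right
      ((min_le_left _ _).trans (rpow_le_rpow hv (le_add_of_nonneg_right hb.le) hβ₁₀)) _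
  have h₂ : min (v ^ β₂) 1 ≤ (v + b) ^ β₂ :=
    (min_le_left _ _).trans (rpow_le_rpow hv (le_add_of_nonneg_right hb.le) hβ₂)
  have h₃ : (u + a) ^ (-e) ≤ 2 ^ e * (w + (a + b)) ^ (-e) :=
    calc (u + a) ^ (-e) ≤ ((w + (a + b)) / 2) ^ (-e) :=
          rpow_le_rpow_of_nonpos (by positivity) (by linarith) (by linarith)
      _ = 2 ^ e * (w + (a + b)) ^ (-e) := by
          rw [div_rpow hK.le zero_le_two, rpow_neg zero_le_two, div_inv_eq_mul, mul_comm]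
  calc min (u ^ β₁) 1 * (u + a) ^ (-e) * (min (v ^ β₂) 1 * (v + b) ^ (-e))
      ≤ (min (w ^ β₁) 1 + (v + b) ^ β₁) * (2 ^ e * (w + (a + b)) ^ (-e))
          * ((v + b) ^ β₂ * (v + b) ^ (-e)) := by gcongr
    _ = _ := by
      simp only [sub_eq_add_neg, rpow_add hB]
      ring

section Kernel

variable {d : ℕ}

lemma varrho_mul_varrho_le {β₁ β₂ γ₁ γ₂ a b : ℝ} (hβ₁₀ : 0 ≤ β₁) (hβ₁₁ : β₁ ≤ 1)
    (hβ₂₀ : 0 ≤ β₂) (hβ₂₁ : β₂ ≤ 1) (ha : 0 < a) (hb : 0 < b)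
    (x y z : EuclideanSpace ℝ (Fin d)) :
    varrho d β₁ γ₁ a (x - z) * varrho d β₂ γ₂ b (z - y)
      ≤ 2 ^ ((d : ℝ) + 1) * (‖x - y‖ + (a + b)) ^ (-((d : ℝ) + 1)) * (a ^ γ₁ * b ^ γ₂)
        * ((min (‖x - y‖ ^ β₁) 1 * (‖z - y‖ + b) ^ (β₂ - ((d : ℝ) + 1))
            + (‖z - y‖ + b) ^ (β₁ + β₂ - ((d : ℝ) + 1)))
          + (min (‖x - y‖ ^ β₂) 1 * (‖z - x‖ + a) ^ (β₁ - ((d : ℝ) + 1))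
            + (‖z - x‖ + a) ^ (β₁ + β₂ - ((d : ℝ) + 1)))) := by
  set e : ℝ := (d : ℝ) + 1
  have he : 0 ≤ e := by positivity
  have hxz : ‖x - z‖ = ‖z - x‖ := norm_sub_rev x z
  have hxy : ‖x - y‖ ≤ ‖z - x‖ + ‖z - y‖ := by
    simpa [hxz] using norm_sub_le_norm_sub_add_norm_sub x z y
  have hzx : ‖z - x‖ ≤ ‖x - y‖ + ‖z - y‖ := by
    simpa [hxz, norm_sub_rev y z] using norm_sub_le_norm_sub_add_norm_sub x y z
  have hzy : ‖z - y‖ ≤ ‖x - y‖ + ‖z - x‖ := by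
    simpa [add_comm] using norm_sub_le_norm_sub_add_norm_sub z x y
  have key : min (‖z - x‖ ^ β₁) 1 * (‖z - x‖ + a) ^ (-e)
        * (min (‖z - y‖ ^ β₂) 1 * (‖z - y‖ + b) ^ (-e))
      ≤ 2 ^ e * (‖x - y‖ + (a + b)) ^ (-e)
        * ((min (‖x - y‖ ^ β₁) 1 * (‖z - y‖ + b) ^ (β₂ - e) + (‖z - y‖ + b) ^ (β₁ + β₂ - e))
          + (min (‖x - y‖ ^ β₂) 1 * (‖z - x‖ + a) ^ (β₁ - e)
            + (‖z - x‖ + a) ^ (β₁ + β₂ - e))) := by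
    rcases le_total (‖x - y‖ + (a + b)) (2 * (‖z - x‖ + a)) with hfar | hnear
    · refine (min_rpow_mul_min_rpow_le he hβ₁₀ hβ₁₁ hβ₂₀ (norm_nonneg _) (norm_nonneg _)
        (norm_nonneg _) ha hb hzx hfar).trans ?_
      exact mul_le_mul_of_nonneg_left (le_add_of_nonneg_right (by positivity)) (by positivity)
    · -- the same bound with the roles of `(x, a, β₁)` and `(y, b, β₂)` exchanged
      have hfar : ‖x - y‖ + (b + a) ≤ 2 * (‖z - y‖ + b) := by linarith
      have := min_rpow_mul_min_rpow_le he hβ₂₀ hβ₂₁ hβ₁₀ (norm_nonneg _) (norm_nonneg _)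
        (norm_nonneg _) hb ha hzy hfar
      rw [add_comm b a, add_comm β₂ β₁, mul_comm] at this
      refine this.trans ?_
      exact mul_le_mul_of_nonneg_left (le_add_of_nonneg_left (by positivity)) (by positivity)
  calc varrho d β₁ γ₁ a (x - z) * varrho d β₂ γ₂ b (z - y)
      = a ^ γ₁ * b ^ γ₂ * (min (‖z - x‖ ^ β₁) 1 * (‖z - x‖ + a) ^ (-e)
          * (min (‖z - y‖ ^ β₂) 1 * (‖z - y‖ + b) ^ (-e))) := by
        rw [varrho, varrho, hxz]
        ring
    _ ≤ a ^ γ₁ * b ^ γ₂ * (2 ^ e * (‖x - y‖ + (a + b)) ^ (-e)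
        * ((min (‖x - y‖ ^ β₁) 1 * (‖z - y‖ + b) ^ (β₂ - e) + (‖z - y‖ + b) ^ (β₁ + β₂ - e))
          + (min (‖x - y‖ ^ β₂) 1 * (‖z - x‖ + a) ^ (β₁ - e)
            + (‖z - x‖ + a) ^ (β₁ + β₂ - e)))) := mul_le_mul_of_nonneg_left key (by positivity)
    _ = _ := by ring

lemma varrho_nonneg {β γ t : ℝ} (ht : 0 ≤ t) (x : EuclideanSpace ℝ (Fin d)) :
    0 ≤ varrho d β γ t x := by
  unfold varrho
  positivity

lemma varrho_zero_mul_rpow (β γ t : ℝ) (x : EuclideanSpace ℝ (Fin d)) :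
    varrho d β 0 t x * t ^ γ = varrho d β γ t x := by
  simp only [varrho, rpow_zero]
  ring

/-- The exponent `d + 1/2` dominates every `d + 1 - β` with `β ≤ 1/2`, which makes this single
constant serve for all the Hölder exponents at once. -/
noncomputable def kernelConst (d : ℕ) : ℝ :=
  ∫ z : EuclideanSpace ℝ (Fin d), (1 + ‖z‖) ^ (-((d : ℝ) + 1 / 2))

lemma kernelConst_pos : 0 < kernelConst d := by
  simpa [kernelConst] using
    integral_one_add_norm_rpow_neg_pos (volume : Measure (EuclideanSpace ℝ (Fin d)))
      (q := d + 1 / 2) (by simp)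

lemma integrable_norm_sub_add_rpow {c β : ℝ} (hc : 0 < c) (hβ : β < 1)
    (y : EuclideanSpace ℝ (Fin d)) :
    Integrable fun z : EuclideanSpace ℝ (Fin d) ↦ (‖z - y‖ + c) ^ (β - ((d : ℝ) + 1)) := by
  have := integrable_norm_add_rpow_neg (volume : Measure (EuclideanSpace ℝ (Fin d))) hc
    (q := d + 1 - β) (by simp; linarith)
  simpa [show -((d : ℝ) + 1 - β) = β - (d + 1) by ring] using this.comp_sub_right y

lemma integral_norm_sub_add_rpow_le {c β : ℝ} (hc : 0 < c) (hβ : β ≤ 1 / 2)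
    (y : EuclideanSpace ℝ (Fin d)) :
    ∫ z : EuclideanSpace ℝ (Fin d), (‖z - y‖ + c) ^ (β - ((d : ℝ) + 1))
      ≤ kernelConst d * c ^ (β - 1) := by
  rw [integral_sub_right_eq_self (fun z ↦ (‖z‖ + c) ^ (β - ((d : ℝ) + 1))) y]
  have := integral_norm_add_rpow_le (volume : Measure (EuclideanSpace ℝ (Fin d))) hc hβ
  rwa [finrank_euclideanSpace_fin] at this

lemma integral_varrho_mul_varrho_le {β₁ β₂ γ₁ γ₂ a b : ℝ} (hβ₁₀ : 0 ≤ β₁) (hβ₁ : β₁ ≤ 1 / 4)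
    (hβ₂₀ : 0 ≤ β₂) (hβ₂ : β₂ ≤ 1 / 4) (ha : 0 < a) (hb : 0 < b)
    (x y : EuclideanSpace ℝ (Fin d)) :
    ∫ z, varrho d β₁ γ₁ a (x - z) * varrho d β₂ γ₂ b (z - y)
      ≤ 2 ^ ((d : ℝ) + 1) * kernelConst d
        * (varrho d β₁ 0 (a + b) (x - y) * (a ^ γ₁ * b ^ (γ₂ + (β₂ - 1)))
          + varrho d 0 0 (a + b) (x - y) * (a ^ γ₁ * b ^ (γ₂ + (β₁ + β₂ - 1)))
          + varrho d β₂ 0 (a + b) (x - y) * (a ^ (γ₁ + (β₁ - 1)) * b ^ γ₂)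
          + varrho d 0 0 (a + b) (x - y) * (a ^ (γ₁ + (β₁ + β₂ - 1)) * b ^ γ₂)) := by
  set e : ℝ := (d : ℝ) + 1
  set c₀ := 2 ^ e * (‖x - y‖ + (a + b)) ^ (-e) * (a ^ γ₁ * b ^ γ₂)
  set m₁ := min (‖x - y‖ ^ β₁) 1
  set m₂ := min (‖x - y‖ ^ β₂) 1
  set f : ℝ → ℝ → EuclideanSpace ℝ (Fin d) → EuclideanSpace ℝ (Fin d) → ℝ :=
    fun c β w z ↦ (‖z - w‖ + c) ^ (β - e)
  have hf : ∀ {c β}, 0 < c → β ≤ 1 / 2 → ∀ w, Integrable (f c β w) :=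
    fun hc hβ w ↦ integrable_norm_sub_add_rpow hc (by linarith) w
  have hf₁ := hf hb (β := β₂) (by linarith) y
  have hf₂ := hf hb (β := β₁ + β₂) (by linarith) y
  have hf₃ := hf ha (β := β₁) (by linarith) x
  have hf₄ := hf ha (β := β₁ + β₂) (by linarith) x
  have hF₁ : Integrable fun z ↦ m₁ * f b β₂ y z + f b (β₁ + β₂) y z := (hf₁.const_mul _).add hf₂
  have hF₂ : Integrable fun z ↦ m₂ * f a β₁ x z + f a (β₁ + β₂) x z := (hf₃.const_mul _).add hf₄
  calc ∫ z, varrho d β₁ γ₁ a (x - z) * varrho d β₂ γ₂ b (z - y)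
      ≤ ∫ z, c₀ * ((m₁ * f b β₂ y z + f b (β₁ + β₂) y z)
          + (m₂ * f a β₁ x z + f a (β₁ + β₂) x z)) :=
        integral_mono_of_nonneg
          (.of_forall fun z ↦ mul_nonneg (varrho_nonneg ha.le _) (varrho_nonneg hb.le _))
          ((hF₁.add hF₂).const_mul _)
          (.of_forall fun z ↦
            varrho_mul_varrho_le hβ₁₀ (by linarith) hβ₂₀ (by linarith) ha hb x y z)
    _ = c₀ * ((m₁ * (∫ z, f b β₂ y z) + ∫ z, f b (β₁ + β₂) y z)
          + (m₂ * (∫ z, f a β₁ x z) + ∫ z, f a (β₁ + β₂) x z)) := by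
        rw [integral_const_mul, integral_add hF₁ hF₂,
          integral_add (hf₁.const_mul _) hf₂, integral_add (hf₃.const_mul _) hf₄,
          integral_const_mul, integral_const_mul]
    _ ≤ c₀ * ((m₁ * (kernelConst d * b ^ (β₂ - 1)) + kernelConst d * b ^ (β₁ + β₂ - 1))
          + (m₂ * (kernelConst d * a ^ (β₁ - 1)) + kernelConst d * a ^ (β₁ + β₂ - 1))) := by
        have hc₀ : 0 ≤ c₀ := by positivity
        have hm₁ : 0 ≤ m₁ := by positivity
        have hm₂ : 0 ≤ m₂ := by positivity
        gcongr <;> exact integral_norm_sub_add_rpow_le (by assumption) (by linarith) _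
    _ = _ := by
      simp only [c₀, m₁, m₂, varrho, rpow_zero, min_self, rpow_add ha, rpow_add hb]
      ring

lemma integral_varrho_zero_mul_sub_rpow_mul_sub_rpow {s t : ℝ} (hst : s < t) (β p q : ℝ)
    (w : EuclideanSpace ℝ (Fin d)) :
    ∫ r in s..t, varrho d β 0 (t - s) w * ((t - r) ^ p * (r - s) ^ q)
      = varrho d β (p + q + 1) (t - s) w * betaFn (p + 1) (q + 1) := by
  rw [intervalIntegral.integral_const_mul, integral_sub_rpow_mul_sub_rpow hst, ← mul_assoc,
    varrho_zero_mul_rpow]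

end Kernel

/-- `f` need not be integrable: if it is not, its integral is the junk value `0 ≤ ∫ g`. -/
lemma intervalIntegral_mono_of_nonneg {f g : ℝ → ℝ} {a b : ℝ} (hab : a ≤ b)
    (hf : ∀ r ∈ Ioo a b, 0 ≤ f r) (hfg : ∀ r ∈ Ioo a b, f r ≤ g r)
    (hg : IntervalIntegrable g volume a b) :
    ∫ r in a..b, f r ≤ ∫ r in a..b, g r := by
  rw [intervalIntegral.integral_of_le hab, intervalIntegral.integral_of_le hab,
    ← Measure.restrict_congr_set Ioo_ae_eq_Ioc]
  exact integral_mono_of_nonneg ((ae_restrict_iff' measurableSet_Ioo).2 (.of_forall hf))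
    (((intervalIntegrable_iff_integrableOn_Ioc_of_le hab).1 hg).mono_set Ioo_subset_Ioc_self)
    ((ae_restrict_iff' measurableSet_Ioo).2 (.of_forall hfg))

theorem stmt_16_general (d : ℕ) :
    ∃ C > (0 : ℝ), ∀ β₁ β₂ γ₁ γ₂ : ℝ,
      0 ≤ β₁ → β₁ ≤ 1/4 → 0 ≤ β₂ → β₂ ≤ 1/4 → -β₁ < γ₁ → -β₂ < γ₂ →
      ∀ s t : ℝ, 0 ≤ s → s < t → ∀ x y : EuclideanSpace ℝ (Fin d),
        (∫ r in s..t, ∫ z : EuclideanSpace ℝ (Fin d),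
            varrho d β₁ γ₁ (t - r) (x - z) * varrho d β₂ γ₂ (r - s) (z - y))
          ≤ C * (varrho d 0 (γ₁ + γ₂ + β₁ + β₂) (t - s) (x - y)
                  * betaFn (γ₁ + β₁ + β₂) (1 + γ₂)
              + varrho d β₂ (γ₁ + γ₂ + β₁) (t - s) (x - y) * betaFn (γ₁ + β₁) (1 + γ₂)
              + varrho d 0 (γ₁ + γ₂ + β₁ + β₂) (t - s) (x - y)
                  * betaFn (γ₂ + β₁ + β₂) (1 + γ₁)
              + varrho d β₁ (γ₁ + γ₂ + β₂) (t - s) (x - y)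
                  * betaFn (γ₂ + β₂) (1 + γ₁)) := by
  refine ⟨2 ^ ((d : ℝ) + 1) * kernelConst d, mul_pos (by positivity) kernelConst_pos, ?_⟩
  intro β₁ β₂ γ₁ γ₂ hβ₁₀ hβ₁ hβ₂₀ hβ₂ hγ₁ hγ₂ s t _ hst x y
  have hQ : ∀ β {p q : ℝ}, -1 < p → -1 < q → IntervalIntegrable
      (fun r ↦ varrho d β 0 (t - s) (x - y) * ((t - r) ^ p * (r - s) ^ q)) volume s t :=
    fun _ _ _ hp hq ↦ (intervalIntegrable_sub_rpow_mul_sub_rpow hp hq hst).const_mul _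
  have h₁ := hQ β₁ (p := γ₁) (q := γ₂ + (β₂ - 1)) (by linarith) (by linarith)
  have h₂ := hQ 0 (p := γ₁) (q := γ₂ + (β₁ + β₂ - 1)) (by linarith) (by linarith)
  have h₃ := hQ β₂ (p := γ₁ + (β₁ - 1)) (q := γ₂) (by linarith) (by linarith)
  have h₄ := hQ 0 (p := γ₁ + (β₁ + β₂ - 1)) (q := γ₂) (by linarith) (by linarith)
  calc _ ≤ ∫ r in s..t, 2 ^ ((d : ℝ) + 1) * kernelConst d
          * (varrho d β₁ 0 (t - s) (x - y) * ((t - r) ^ γ₁ * (r - s) ^ (γ₂ + (β₂ - 1)))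
            + varrho d 0 0 (t - s) (x - y) * ((t - r) ^ γ₁ * (r - s) ^ (γ₂ + (β₁ + β₂ - 1)))
            + varrho d β₂ 0 (t - s) (x - y) * ((t - r) ^ (γ₁ + (β₁ - 1)) * (r - s) ^ γ₂)
            + varrho d 0 0 (t - s) (x - y) * ((t - r) ^ (γ₁ + (β₁ + β₂ - 1)) * (r - s) ^ γ₂)) := by
        refine intervalIntegral_mono_of_nonneg hst.le (fun r hr ↦ integral_nonneg fun z ↦
          mul_nonneg (varrho_nonneg (by linarith [hr.2]) _) (varrho_nonneg (by linarith [hr.1]) _))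
          (fun r hr ↦ ?_) ((((h₁.add h₂).add h₃).add h₄).const_mul _)
        simpa only [sub_add_sub_cancel] using integral_varrho_mul_varrho_le hβ₁₀ hβ₁ hβ₂₀ hβ₂
          (sub_pos.2 hr.2) (sub_pos.2 hr.1) x y
    _ = _ := by
        rw [intervalIntegral.integral_const_mul,
          intervalIntegral.integral_add ((h₁.add h₂).add h₃) h₄,
          intervalIntegral.integral_add (h₁.add h₂) h₃, intervalIntegral.integral_add h₁ h₂]
        simp only [integral_varrho_zero_mul_sub_rpow_mul_sub_rpow hst]
        rw [betaFn_comm (γ₁ + 1), betaFn_comm (γ₁ + 1)]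
        ring_nf

theorem stmt_16 (d : ℕ) (hd : 1 ≤ d) :
    ∃ C > (0 : ℝ), ∀ β₁ β₂ γ₁ γ₂ : ℝ,
      0 ≤ β₁ → β₁ ≤ 1/4 → 0 ≤ β₂ → β₂ ≤ 1/4 → -β₁ < γ₁ → -β₂ < γ₂ →
      ∀ s t : ℝ, 0 ≤ s → s < t → ∀ x y : EuclideanSpace ℝ (Fin d),
        (∫ r in s..t, ∫ z : EuclideanSpace ℝ (Fin d),
            varrho d β₁ γ₁ (t - r) (x - z) * varrho d β₂ γ₂ (r - s) (z - y))
          ≤ C * (varrho d 0 (γ₁ + γ₂ + β₁ + β₂) (t - s) (x - y)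
                  * betaFn (γ₁ + β₁ + β₂) (1 + γ₂)
              + varrho d β₂ (γ₁ + γ₂ + β₁) (t - s) (x - y) * betaFn (γ₁ + β₁) (1 + γ₂)
              + varrho d 0 (γ₁ + γ₂ + β₁ + β₂) (t - s) (x - y)
                  * betaFn (γ₂ + β₁ + β₂) (1 + γ₁)
              + varrho d β₁ (γ₁ + γ₂ + β₂) (t - s) (x - y)
                  * betaFn (γ₂ + β₂) (1 + γ₁)) :=
  stmt_16_general d
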